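/- Fix M > 1, m ≥ 1, φ(t) = (2/(m+2))t^((m+2)/2), and let ν_j ∈ ℝⁿ with |ν_j| ≤ M - 1 + φ(3T₀/8) for some small T₀ ∈ (0,1). Then there is a constant C > 0 such that for all t ≥ 0 and x ∈ ℝⁿ with |x| ≤ φ(t) + M - 1, one has φ(t)² - |x - ν_j|² ≤ C·((φ(t)+M)² - |x|²). -/
import Mathlib


/-- The generalized distance function for the Tricomi operator. -/
noncomputable def phi (m : ℕ) (t : ℝ) : ℝ := (2 / ((m : ℝ) + 2)) * t ^ (((m : ℝ) + 2) / 2)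

/-- The reverse comparison estimate (3.15): for a shift `v` with
`|v| ≤ M - 1 + φ(3T₀/8)`, one has `φ(t)² - |x - v|² ≤ C·((φ(t)+M)² - |x|²)` whenever
`|x| ≤ φ(t) + M - 1`. -/
theorem stmt_8 (m n : ℕ) (hm : 1 ≤ m) (M T₀ : ℝ) (hM : 1 < M)
    (hT₀ : T₀ ∈ Set.Ioo (0 : ℝ) 1)
    (v : EuclideanSpace ℝ (Fin n)) (hv : ‖v‖ ≤ M - 1 + phi m (3 * T₀ / 8)) :
    ∃ C > 0, ∀ t : ℝ, 0 ≤ t → ∀ x : EuclideanSpace ℝ (Fin n),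
      ‖x‖ ≤ phi m t + M - 1 →
      (phi m t) ^ 2 - ‖x - v‖ ^ 2 ≤ C * ((phi m t + M) ^ 2 - ‖x‖ ^ 2) := by
  refine ⟨1 + 2 * ‖v‖, by positivity, ?_⟩
  intro t ht x hx
  have hφ : 0 ≤ phi m t := by
    unfold phi
    have : (0:ℝ) ≤ t ^ (((m : ℝ) + 2) / 2) := Real.rpow_nonneg ht _
    positivity
  have h1 : ‖x‖ - ‖v‖ ≤ ‖x - v‖ := norm_sub_norm_le x v
  have h2 : (0:ℝ) ≤ ‖x‖ := norm_nonneg x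
  have h3 : (0:ℝ) ≤ ‖v‖ := norm_nonneg v
  have h4 : (0:ℝ) ≤ ‖x - v‖ := norm_nonneg _
  have key : ‖x‖ ^ 2 - 2 * ‖x‖ * ‖v‖ ≤ ‖x - v‖ ^ 2 := by
    rcases le_or_gt ‖v‖ ‖x‖ with h | h
    · nlinarith
    · nlinarith
  nlinarith [mul_nonneg h3 (mul_nonneg (by linarith : (0:ℝ) ≤ phi m t + M - 1 - ‖x‖)
      (by linarith : (0:ℝ) ≤ phi m t + M + ‖x‖)),
    mul_nonneg h3 h2, sq_nonneg (phi m t + M - ‖x‖)]
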